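/- Let M ≥ 2 be an integer, R > 0, τ > 0, and set a_k := R (cos(2πk/M), sin(2πk/M)) ∈ ℝ² for 0 ≤ k ≤ M−1. Let N ∼ N(0, I₂) be a standard Gaussian vector in ℝ² and set X := a_0 + τN. Then P[ ∃ k ∈ {1, …, M−1} : ‖X − a_k‖₂ ≤ ‖X − a_0‖₂ ] ≤ 2 Φ̄( R sin(π/M) / τ ), where Φ̄(t) := P[G ≥ t] for a standard one-dimensional Gaussian G ∼ N(0,1). -/

import Mathlib

open MeasureTheory ProbabilityTheory

/-- The `k`-th of `M` equally spaced points on the circle of radius `R` in `ℝ²`. -/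
noncomputable def circpt (R : ℝ) (M k : ℕ) : EuclideanSpace ℝ (Fin 2) :=
  (WithLp.equiv 2 (Fin 2 → ℝ)).symm
    ![R * Real.cos (2 * Real.pi * k / M), R * Real.sin (2 * Real.pi * k / M)]

/-- The standard Gaussian measure `N(0, I₂)` on `ℝ²`. -/
noncomputable def stdGauss2 : Measure (EuclideanSpace ℝ (Fin 2)) :=
  (Measure.pi fun _ : Fin 2 => gaussianReal 0 1).map
    (MeasurableEquiv.toLp 2 (Fin 2 → ℝ))

/-!
Since all centres lie on one circle, `‖X - a_k‖ ≤ ‖X - a_0‖` says that `X` lies in the half-plane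
`0 ≤ ⟪a_k - a_0, X⟫`, whose unit normal is the direction of the chord at angle `πk/M`. For
`1 ≤ k ≤ M - 1` these normals lie in the cone spanned by the normals of the two nearest
neighbours `k = 1` and `k = M - 1`, so the event is contained in the union of those two
half-planes. Each of them lies at distance `R sin(π/M)` from `a_0`, and a standard Gaussian gives
every half-plane at distance `s` from the origin the mass `Φ̄(s)`.
-/

open Real
open scoped RealInnerProductSpace

section Gaussian

variable {E : Type*} [NormedAddCommGroup E] [InnerProductSpace ℝ E] [FiniteDimensional ℝ E]
  [MeasurableSpace E] [BorelSpace E]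

lemma stdGaussian_map_innerSL (u : E) :
    (stdGaussian E).map (innerSL ℝ u) = gaussianReal 0 (‖u‖₊ ^ 2) := by
  rw [IsGaussian.map_eq_gaussianReal, integral_strongDual_stdGaussian,
    variance_dual_stdGaussian, innerSL_apply_norm]
  congr
  rw [← coe_nnnorm, ← NNReal.coe_pow, Real.toNNReal_coe]

lemma stdGaussian_setOf_le_inner (u : E) (hu : ‖u‖ = 1) (t : ℝ) :
    stdGaussian E {x | t ≤ ⟪u, x⟫} = gaussianReal 0 1 (Set.Ici t) := by
  have hu' : ‖u‖₊ = 1 := by ext; simpa using hu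
  rw [← one_pow 2, ← hu', ← stdGaussian_map_innerSL,
    Measure.map_apply (by fun_prop) measurableSet_Ici]
  rfl

end Gaussian

lemma stdGauss2_eq_stdGaussian : stdGauss2 = stdGaussian (EuclideanSpace ℝ (Fin 2)) :=
  map_pi_eq_stdGaussian

lemma inner_le_inner_of_norm_sub_le {F : Type*} [NormedAddCommGroup F] [InnerProductSpace ℝ F]
    {x a b : F} (hab : ‖a‖ = ‖b‖) (h : ‖x - a‖ ≤ ‖x - b‖) : ⟪x, b⟫ ≤ ⟪x, a⟫ := by
  have := pow_le_pow_left₀ (norm_nonneg _) h 2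
  rw [norm_sub_sq_real, norm_sub_sq_real, hab] at this
  linarith

noncomputable def chordDir (θ : ℝ) : EuclideanSpace ℝ (Fin 2) := !₂[-sin θ, cos θ]

lemma inner_chordDir (θ : ℝ) (x : EuclideanSpace ℝ (Fin 2)) :
    ⟪chordDir θ, x⟫ = -(x 0 * sin θ) + x 1 * cos θ := by
  simp [chordDir, PiLp.inner_apply, Fin.sum_univ_two]

lemma norm_chordDir (θ : ℝ) : ‖chordDir θ‖ = 1 := by
  simp [chordDir, EuclideanSpace.norm_eq, Fin.sum_univ_two]

lemma sin_mul_inner_chordDir (x : EuclideanSpace ℝ (Fin 2)) (θ φ : ℝ) :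
    sin θ * ⟪chordDir φ, x⟫ = sin φ * ⟪chordDir θ, x⟫ + x 1 * sin (θ - φ) := by
  rw [inner_chordDir, inner_chordDir, sin_sub]
  ring

lemma circpt_sub_circpt_zero (R : ℝ) (M k : ℕ) :
    circpt R M k - circpt R M 0 = (2 * R * sin (π * k / M)) • chordDir (π * k / M) := by
  have h : 2 * π * k / M = 2 * (π * k / M) := by ring
  ext i
  fin_cases i
  · simp [circpt, chordDir, h, cos_two_mul, cos_sq']
    ring
  · simp [circpt, chordDir, h, sin_two_mul]
    ring

lemma inner_circpt_zero_chordDir (R : ℝ) (M : ℕ) (φ : ℝ) :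
    ⟪chordDir φ, circpt R M 0⟫ = -(R * sin φ) := by
  simp [inner_chordDir, circpt]

lemma norm_circpt (R : ℝ) (M k : ℕ) : ‖circpt R M k‖ = |R| := by
  simp [circpt, EuclideanSpace.norm_eq, Fin.sum_univ_two, mul_pow, ← mul_add, sqrt_sq_eq_abs]

lemma inner_chordDir_nonneg_or {x : EuclideanSpace ℝ (Fin 2)} {α θ : ℝ} (hα : 0 < α)
    (hαθ : α ≤ θ) (hθα : θ ≤ π - α) (hx : 0 ≤ ⟪chordDir θ, x⟫) :
    0 ≤ ⟪chordDir α, x⟫ ∨ 0 ≤ ⟪chordDir (π - α), x⟫ := by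
  have hsinθ : 0 < sin θ := sin_pos_of_pos_of_lt_pi (by linarith) (by linarith)
  have hsinα : 0 ≤ sin α := sin_nonneg_of_nonneg_of_le_pi hα.le (by linarith)
  -- by `sin_mul_inner_chordDir`, the sign of `x 1` decides which of the two cone edges works
  rcases le_total 0 (x 1) with hx1 | hx1
  · left
    have : 0 ≤ sin (θ - α) := sin_nonneg_of_nonneg_of_le_pi (by linarith) (by linarith)
    have key := sin_mul_inner_chordDir x θ α
    refine nonneg_of_mul_nonneg_right ?_ hsinθ
    linarith [mul_nonneg hsinα hx, mul_nonneg hx1 this]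
  · right
    have : sin (θ - (π - α)) ≤ 0 := sin_nonpos_of_nonpos_of_neg_pi_le (by linarith) (by linarith)
    have key := sin_mul_inner_chordDir x θ (π - α)
    rw [sin_pi_sub] at key
    refine nonneg_of_mul_nonneg_right ?_ hsinθ
    linarith [mul_nonneg hsinα hx, mul_nonneg_of_nonpos_of_nonpos hx1 this]

lemma inner_chordDir_ge_of_norm_sub_circpt_le {R τ : ℝ} {M k : ℕ} (hR : 0 < R) (hτ : 0 < τ)
    (hk : 1 ≤ k) (hkM : k ≤ M - 1) {N : EuclideanSpace ℝ (Fin 2)}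
    (h : ‖circpt R M 0 + τ • N - circpt R M k‖ ≤ ‖circpt R M 0 + τ • N - circpt R M 0‖) :
    R * sin (π / M) / τ ≤ ⟪chordDir (π / M), N⟫ ∨
      R * sin (π / M) / τ ≤ ⟪chordDir (π - π / M), N⟫ := by
  set X := circpt R M 0 + τ • N
  set θ := π * k / M
  have hM : (0 : ℝ) < M := by norm_cast; omega
  have hk' : (1 : ℝ) ≤ k := by exact_mod_cast hk
  have hkM' : (k : ℝ) ≤ M - 1 := by
    rw [← Nat.cast_one, ← Nat.cast_sub (by omega)]; exact_mod_cast hkM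
  have hα : 0 < π / M := by positivity
  have hαθ : π / M ≤ θ := by
    rw [div_le_div_iff_of_pos_right hM]; nlinarith [pi_pos]
  have hθα : θ ≤ π - π / M := by
    rw [div_le_iff₀ hM, sub_mul, div_mul_cancel₀ _ hM.ne']; nlinarith [pi_pos]
  have hsinθ : 0 < sin θ := sin_pos_of_pos_of_lt_pi (by linarith) (by linarith)
  have hX : 0 ≤ ⟪chordDir θ, X⟫ := by
    have hle := inner_le_inner_of_norm_sub_le (by simp only [norm_circpt]) h
    have hsub : 0 ≤ ⟪X, circpt R M k - circpt R M 0⟫ := by rw [inner_sub_right]; linarith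
    rw [circpt_sub_circpt_zero, inner_smul_right, real_inner_comm] at hsub
    exact nonneg_of_mul_nonneg_right hsub (by positivity)
  have hXN (φ : ℝ) : ⟪chordDir φ, X⟫ = -(R * sin φ) + τ * ⟪chordDir φ, N⟫ := by
    rw [inner_add_right, inner_smul_right, inner_circpt_zero_chordDir]
  rcases inner_chordDir_nonneg_or hα hαθ hθα hX with h | h
  · left
    rw [hXN] at h
    rw [div_le_iff₀ hτ]
    linarith
  · right
    rw [hXN, sin_pi_sub] at h
    rw [div_le_iff₀ hτ]
    linarith

theorem stmt13_general (M : ℕ) (R τ : ℝ) (hR : 0 < R) (hτ : 0 < τ) :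
    (stdGauss2 {N | ∃ k, 1 ≤ k ∧ k ≤ M - 1 ∧
        ‖circpt R M 0 + τ • N - circpt R M k‖ ≤ ‖circpt R M 0 + τ • N - circpt R M 0‖}).toReal
      ≤ 2 * (gaussianReal 0 1 {g | R * Real.sin (Real.pi / M) / τ ≤ g}).toReal := by
  rw [stdGauss2_eq_stdGaussian]
  set t := R * sin (π / M) / τ
  have hsub : {N : EuclideanSpace ℝ (Fin 2) | ∃ k, 1 ≤ k ∧ k ≤ M - 1 ∧
      ‖circpt R M 0 + τ • N - circpt R M k‖ ≤ ‖circpt R M 0 + τ • N - circpt R M 0‖} ⊆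
      {N | t ≤ ⟪chordDir (π / M), N⟫} ∪ {N | t ≤ ⟪chordDir (π - π / M), N⟫} := by
    rintro N ⟨k, hk, hkM, h⟩
    exact inner_chordDir_ge_of_norm_sub_circpt_le hR hτ hk hkM h
  have hhalf (φ : ℝ) : stdGaussian _ {N | t ≤ ⟪chordDir φ, N⟫} = gaussianReal 0 1 {g | t ≤ g} :=
    stdGaussian_setOf_le_inner _ (norm_chordDir φ) t
  calc (stdGaussian _).real _ ≤ (stdGaussian _).real _ := measureReal_mono hsub
    _ ≤ _ := measureReal_union_le _ _
    _ = _ := by simp only [measureReal_def, hhalf]; ring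

/-- **Voronoi crossing bound.** For `X = a₀ + τN` with `N ∼ N(0, I₂)`, the probability that
some other center `a_k` is at least as close to `X` as `a₀` is at most
`2 Φ̄(R sin(π/M)/τ)`. -/
theorem stmt13 (M : ℕ) (hM : 2 ≤ M) (R τ : ℝ) (hR : 0 < R) (hτ : 0 < τ) :
    (stdGauss2 {N | ∃ k, 1 ≤ k ∧ k ≤ M - 1 ∧
        ‖circpt R M 0 + τ • N - circpt R M k‖ ≤ ‖circpt R M 0 + τ • N - circpt R M 0‖}).toReal
      ≤ 2 * (gaussianReal 0 1 {g | R * Real.sin (Real.pi / M) / τ ≤ g}).toReal :=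
  stmt13_general M R τ hR hτ
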